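/- Every element y of L = L(p_1,…,p_n) can be written uniquely as y = a_1 e_1 + ⋯ + a_n e_n + a c with integers 0 ≤ a_i < p_i (1 ≤ i ≤ n) and a ∈ ℤ. Moreover, for y with this normal form, y ∈ L_+ if and only if a ≥ 0; and the quotient group L/ℤc is isomorphic to ∏_{i=1}^n ℤ/p_iℤ (via the classes of e_1,…,e_n). -/
import Mathlib


noncomputable section

open MvPolynomial

def LRel (ι : Type) [DecidableEq ι] (p : ι → ℕ) : AddSubgroup (Option ι → ℤ) :=
  AddSubgroup.closure
    { v | ∃ i : ι, v = (p i : ℤ) • Pi.single (some i) 1 - Pi.single (none : Option ι) 1 }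

abbrev LGroup (ι : Type) [DecidableEq ι] (p : ι → ℕ) : Type :=
  (Option ι → ℤ) ⧸ LRel ι p

def egen {ι : Type} [DecidableEq ι] (p : ι → ℕ) (i : ι) : LGroup ι p :=
  QuotientAddGroup.mk (Pi.single (some i) 1)

def cgen {ι : Type} [DecidableEq ι] (p : ι → ℕ) : LGroup ι p :=
  QuotientAddGroup.mk (Pi.single (none : Option ι) 1)

def Lplus {ι : Type} [DecidableEq ι] (p : ι → ℕ) : AddSubmonoid (LGroup ι p) :=
  AddSubmonoid.closure (Set.range (egen p))


namespace NF

variable {n : ℕ} (p : Fin n → ℕ)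

/-- the relation vectors -/
def relvec (i : Fin n) : Option (Fin n) → ℤ :=
  (p i : ℤ) • Pi.single (some i) 1 - Pi.single (none : Option (Fin n)) 1

lemma relvec_mem (i : Fin n) : relvec p i ∈ LRel (Fin n) p :=
  AddSubgroup.subset_closure ⟨i, rfl⟩

@[simp] lemma relvec_some (i j : Fin n) :
    relvec p i (some j) = if j = i then (p i : ℤ) else 0 := by
  simp [relvec, Pi.single_apply]

@[simp] lemma relvec_none (i : Fin n) : relvec p i (none : Option (Fin n)) = -1 := by
  simp [relvec, Pi.single_apply]

/-- representative vector of a normal form -/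
def reprVec (a : Fin n → ℤ) (aZ : ℤ) : Option (Fin n) → ℤ :=
  fun o => Option.elim o aZ a

@[simp] lemma reprVec_some (a : Fin n → ℤ) (aZ : ℤ) (i : Fin n) :
    reprVec a aZ (some i) = a i := rfl
@[simp] lemma reprVec_none (a : Fin n → ℤ) (aZ : ℤ) :
    reprVec a aZ (none : Option (Fin n)) = aZ := rfl

lemma vec_eq (a : Fin n → ℕ) (aZ : ℤ) :
    (∑ i, (a i : ℤ) • Pi.single (some i) (1:ℤ)) + aZ • Pi.single (none : Option (Fin n)) (1:ℤ)
      = reprVec (fun i => (a i : ℤ)) aZ := by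
  funext o
  cases o with
  | none => simp [Finset.sum_apply, Pi.single_apply]
  | some j => simp [Finset.sum_apply, Pi.single_apply]

lemma mk_reprVec (a : Fin n → ℕ) (aZ : ℤ) :
    ((∑ i, a i • egen p i) + aZ • cgen p : LGroup (Fin n) p)
      = QuotientAddGroup.mk (reprVec (fun i => (a i : ℤ)) aZ) := by
  rw [← vec_eq]
  have h1 : ∀ v : Option (Fin n) → ℤ,
      (QuotientAddGroup.mk v : LGroup (Fin n) p) = QuotientAddGroup.mk' _ v := fun _ => rfl
  simp only [egen, cgen, h1, ← map_nsmul, ← map_zsmul, ← map_sum, ← map_add]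
  congr 1


/-- mod-p invariants -/
def phi : (Option (Fin n) → ℤ) →+ ((i : Fin n) → ZMod (p i)) where
  toFun v i := (v (some i) : ZMod (p i))
  map_zero' := by funext i; simp
  map_add' x y := by funext i; simp

/-- weight invariant -/
def hwt : (Option (Fin n) → ℤ) →+ ℤ where
  toFun v := v none * (∏ j, (p j : ℤ)) +
    ∑ i, v (some i) * ∏ j ∈ Finset.univ.erase i, (p j : ℤ)
  map_zero' := by simp
  map_add' x y := by
    simp only [Pi.add_apply, add_mul, Finset.sum_add_distrib]
    ring

lemma phi_vanish {u : Option (Fin n) → ℤ} (hu : u ∈ LRel (Fin n) p) : phi p u = 0 := by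
  have : LRel (Fin n) p ≤ (phi p).ker := by
    rw [LRel, AddSubgroup.closure_le]
    rintro v ⟨i, rfl⟩
    show relvec p i ∈ (phi p).ker
    simp only [AddMonoidHom.mem_ker]
    funext j
    show ((relvec p i) (some j) : ZMod (p j)) = 0
    rcases eq_or_ne j i with rfl | hne
    · simp
    · simp [hne]
  exact this hu

lemma hwt_vanish {u : Option (Fin n) → ℤ} (hu : u ∈ LRel (Fin n) p) : hwt p u = 0 := by
  have : LRel (Fin n) p ≤ (hwt p).ker := by
    rw [LRel, AddSubgroup.closure_le]
    rintro v ⟨i, rfl⟩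
    show relvec p i ∈ (hwt p).ker
    simp only [AddMonoidHom.mem_ker]
    show (relvec p i none) * _ + ∑ j, (relvec p i (some j)) * _ = 0
    rw [relvec_none]
    rw [Finset.sum_congr rfl (fun j _ => by rw [relvec_some])]
    simp only [ite_mul, zero_mul, Finset.sum_ite_eq', Finset.mem_univ, if_true]
    rw [Finset.mul_prod_erase Finset.univ (fun j => (p j : ℤ)) (Finset.mem_univ i)]
    ring
  exact this hu


lemma exists_nf (hp : ∀ i, 2 ≤ p i) (v : Option (Fin n) → ℤ) :
    (QuotientAddGroup.mk v : LGroup (Fin n) p) =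
      (∑ i, (v (some i) % (p i : ℤ)).toNat • egen p i) +
        (v none + ∑ i, v (some i) / (p i : ℤ)) • cgen p := by
  rw [mk_reprVec]
  rw [QuotientAddGroup.eq]
  have hmod : ∀ i, ((((v (some i)) % (p i : ℤ)).toNat : ℤ)) = v (some i) % (p i : ℤ) := by
    intro i
    have h2 := hp i
    have h0 : (0:ℤ) < (p i : ℤ) := by exact_mod_cast (by omega : 0 < p i)
    exact Int.toNat_of_nonneg (Int.emod_nonneg _ (ne_of_gt h0))
  have key : -v + reprVec (fun i => (((v (some i)) % (p i : ℤ)).toNat : ℤ))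
      (v none + ∑ i, v (some i) / (p i : ℤ))
      = ∑ i, (-(v (some i) / (p i : ℤ))) • relvec p i := by
    funext o
    cases o with
    | none =>
      simp only [Pi.add_apply, Pi.neg_apply, reprVec_none, Finset.sum_apply, Pi.smul_apply,
        relvec_none, smul_eq_mul]
      have h3 : ∀ i ∈ Finset.univ, (-(v (some i) / (p i:ℤ))) * (-1) = v (some i) / (p i:ℤ) :=
        fun i _ => by ring
      rw [Finset.sum_congr rfl h3]
      ring
    | some j =>
      simp only [Pi.add_apply, Pi.neg_apply, reprVec_some, Finset.sum_apply, Pi.smul_apply,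
        relvec_some, smul_eq_mul, mul_ite, mul_zero, Finset.sum_ite_eq, Finset.sum_ite_eq',
        Finset.mem_univ, if_true]
      rw [hmod j]
      linear_combination Int.emod_add_mul_ediv (v (some j)) ((p j : ℤ))
  rw [key]
  exact AddSubgroup.sum_mem _ (fun i _ => AddSubgroup.zsmul_mem _ (relvec_mem p i) _)


lemma nf_unique (hp : ∀ i, 2 ≤ p i) {a a' : Fin n → ℕ} {aZ aZ' : ℤ}
    (ha : ∀ i, a i < p i) (ha' : ∀ i, a' i < p i)
    (heq : ((∑ i, a i • egen p i) + aZ • cgen p : LGroup (Fin n) p)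
      = (∑ i, a' i • egen p i) + aZ' • cgen p) : a' = a ∧ aZ' = aZ := by
  rw [mk_reprVec, mk_reprVec, QuotientAddGroup.eq] at heq
  set w := reprVec (fun i => ((a i : ℤ))) aZ with hw
  set w' := reprVec (fun i => ((a' i : ℤ))) aZ' with hw'
  have hphi : phi p w = phi p w' := by
    have h0 := phi_vanish p heq
    rw [map_add, map_neg, neg_add_eq_zero] at h0
    exact h0
  have haa : a = a' := by
    funext j
    haveI : NeZero (p j) := ⟨by have := hp j; omega⟩
    have h1 : (((a j : ℤ)) : ZMod (p j)) = (((a' j : ℤ)) : ZMod (p j)) := congrFun hphi j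
    have h2 : ((a j : ZMod (p j))) = ((a' j : ZMod (p j))) := by push_cast at h1; exact h1
    calc a j = ((a j : ZMod (p j))).val := (ZMod.val_cast_of_lt (ha j)).symm
      _ = ((a' j : ZMod (p j))).val := by rw [h2]
      _ = a' j := ZMod.val_cast_of_lt (ha' j)
  have hhwt : hwt p w = hwt p w' := by
    have h0 := hwt_vanish p heq
    rw [map_add, map_neg, neg_add_eq_zero] at h0
    exact h0
  have hval : ∀ (b : Fin n → ℕ) (bZ : ℤ),
      hwt p (reprVec (fun i => ((b i : ℤ))) bZ)
        = bZ * (∏ j, (p j : ℤ)) + ∑ i, (b i : ℤ) * ∏ j ∈ Finset.univ.erase i, (p j : ℤ) := by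
    intro b bZ; rfl
  rw [hw, hw', hval, hval, haa] at hhwt
  have hP : (0:ℤ) < ∏ j, (p j : ℤ) := by
    apply Finset.prod_pos
    intro j _
    have := hp j
    exact_mod_cast (by omega : 0 < p j)
  have : aZ = aZ' := by
    have h2 := add_right_cancel hhwt
    exact mul_right_cancel₀ (ne_of_gt hP) h2
  exact ⟨haa.symm, this.symm⟩


lemma cgen_eq (i : Fin n) : (p i) • egen p i = cgen p := by
  have h2 : ((p i) • egen p i : LGroup (Fin n) p)
      = QuotientAddGroup.mk ((p i) • Pi.single (some i) (1:ℤ)) :=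
    (map_nsmul (QuotientAddGroup.mk' (LRel (Fin n) p)) _ _).symm
  rw [h2, cgen, QuotientAddGroup.eq]
  have h3 : -((p i) • Pi.single (some i) (1:ℤ)) + Pi.single (none : Option (Fin n)) (1:ℤ)
      = -(relvec p i) := by
    rw [relvec, ← natCast_zsmul]
    abel
  rw [h3]
  exact AddSubgroup.neg_mem _ (relvec_mem p i)

lemma sum_mem_Lplus (b : Fin n → ℕ) : (∑ i, b i • egen p i) ∈ Lplus p :=
  AddSubmonoid.sum_mem _ fun i _ =>
    AddSubmonoid.nsmul_mem _ (AddSubmonoid.subset_closure (Set.mem_range_self i)) _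

lemma Lplus_rep {y : LGroup (Fin n) p} (hy : y ∈ Lplus p) :
    ∃ b : Fin n → ℕ, y = ∑ i, b i • egen p i := by
  refine AddSubmonoid.closure_induction ?_ ?_ ?_ hy
  · rintro x ⟨i, rfl⟩
    exact ⟨Pi.single i 1, by simp [Pi.single_apply, ite_smul, zero_nsmul, Finset.sum_ite_eq']⟩
  · exact ⟨0, by simp [zero_nsmul]⟩
  · rintro x y - - ⟨bx, rfl⟩ ⟨by', rfl⟩
    exact ⟨bx + by', by simp [add_nsmul, Finset.sum_add_distrib]⟩


lemma toNat_mod_lt (hp : ∀ i, 2 ≤ p i) (x : ℤ) (i : Fin n) : (x % (p i : ℤ)).toNat < p i := by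
  have h2 := hp i
  have h0 : (0:ℤ) < (p i:ℤ) := by exact_mod_cast (by omega : 0 < p i)
  have := Int.emod_nonneg x (ne_of_gt h0)
  have := Int.emod_lt_of_pos x h0
  omega

lemma part1 (hn : 1 ≤ n) (hp : ∀ i, 2 ≤ p i) (y : LGroup (Fin n) p) :
    ∃ (a : Fin n → ℕ) (aZ : ℤ),
      (∀ i, a i < p i) ∧
      y = (∑ i, a i • egen p i) + aZ • cgen p ∧
      (∀ (a' : Fin n → ℕ) (aZ' : ℤ), (∀ i, a' i < p i) →
        y = (∑ i, a' i • egen p i) + aZ' • cgen p → a' = a ∧ aZ' = aZ) ∧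
      (y ∈ Lplus p ↔ 0 ≤ aZ) := by
  obtain ⟨v, rfl⟩ := QuotientAddGroup.mk_surjective y
  have ha : ∀ i, (v (some i) % (p i : ℤ)).toNat < p i := fun i => toNat_mod_lt p hp _ i
  have hnf := exists_nf p hp v
  refine ⟨fun i => (v (some i) % (p i : ℤ)).toNat, v none + ∑ i, v (some i) / (p i : ℤ),
    ha, hnf, ?_, ?_, ?_⟩
  · intro a' aZ' ha' heq
    exact nf_unique p hp ha ha' (hnf.symm.trans heq)
  · -- mem Lplus → 0 ≤ aZ
    intro hy
    obtain ⟨b, hb⟩ := Lplus_rep p hy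
    have h1 : (QuotientAddGroup.mk v : LGroup (Fin n) p)
        = QuotientAddGroup.mk (reprVec (fun i => ((b i : ℤ))) 0) := by
      rw [← mk_reprVec, zero_zsmul, add_zero, ← hb]
    have h2 := exists_nf p hp (reprVec (fun i => ((b i : ℤ))) 0)
    have ha2 : ∀ i, ((reprVec (fun i => ((b i : ℤ))) 0) (some i) % (p i : ℤ)).toNat < p i :=
      fun i => toNat_mod_lt p hp _ i
    have h4 := nf_unique p hp ha ha2 (hnf.symm.trans (h1.trans h2))
    rw [← h4.2]
    simp only [reprVec_none, reprVec_some, zero_add]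
    apply Finset.sum_nonneg
    intro i _
    exact Int.ediv_nonneg (Int.natCast_nonneg _) (Int.natCast_nonneg _)
  · -- 0 ≤ aZ → mem Lplus
    intro hZ
    rw [hnf]
    apply AddSubmonoid.add_mem _ (sum_mem_Lplus p _)
    set aZ := v none + ∑ i, v (some i) / (p i : ℤ) with haZ
    have i0 : Fin n := ⟨0, hn⟩
    have hc : cgen p ∈ Lplus p := by
      rw [← cgen_eq p i0]
      exact AddSubmonoid.nsmul_mem _ (AddSubmonoid.subset_closure (Set.mem_range_self i0)) _
    have : aZ • cgen p = aZ.toNat • cgen p := by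
      rw [← natCast_zsmul, Int.toNat_of_nonneg hZ]
    rw [this]
    exact AddSubmonoid.nsmul_mem _ hc _


def phibar : LGroup (Fin n) p →+ ((i : Fin n) → ZMod (p i)) :=
  QuotientAddGroup.lift _ (phi p) (fun _ hu => phi_vanish p hu)

@[simp] lemma phibar_mk (v : Option (Fin n) → ℤ) :
    phibar p (QuotientAddGroup.mk v) = phi p v := rfl

@[simp] lemma phi_apply (v : Option (Fin n) → ℤ) (j : Fin n) :
    phi p v j = ((v (some j) : ℤ) : ZMod (p j)) := rfl

lemma phibar_surj (hp : ∀ i, 2 ≤ p i) : Function.Surjective (phibar p) := by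
  intro x
  refine ⟨QuotientAddGroup.mk (reprVec (fun i => (((x i).val : ℤ))) 0), ?_⟩
  rw [phibar_mk]
  funext j
  haveI : NeZero (p j) := ⟨by have := hp j; omega⟩
  show ((((x j).val : ℤ)) : ZMod (p j)) = x j
  push_cast
  exact ZMod.natCast_rightInverse (x j)

lemma phibar_ker (hn : 1 ≤ n) (hp : ∀ i, 2 ≤ p i) :
    (phibar p).ker = AddSubgroup.zmultiples (cgen p) := by
  apply le_antisymm
  · intro y hy
    rw [AddMonoidHom.mem_ker] at hy
    obtain ⟨a, aZ, ha, hnf, -, -⟩ := part1 p hn hp y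
    have hphival : phibar p y = fun j => (((a j : ℤ)) : ZMod (p j)) := by
      rw [hnf, mk_reprVec, phibar_mk]
      rfl
    have haz : ∀ j, a j = 0 := by
      intro j
      haveI : NeZero (p j) := ⟨by have := hp j; omega⟩
      have h1 : (((a j : ℤ)) : ZMod (p j)) = 0 := by
        rw [← congrFun hphival j, hy]
        rfl
      push_cast at h1
      calc a j = ((a j : ZMod (p j))).val := (ZMod.val_cast_of_lt (ha j)).symm
        _ = (0 : ZMod (p j)).val := by rw [h1]
        _ = 0 := ZMod.val_zero
    have : y = aZ • cgen p := by
      rw [hnf]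
      simp [haz, zero_nsmul]
    rw [this]
    exact AddSubgroup.mem_zmultiples_iff.mpr ⟨aZ, rfl⟩
  · rw [AddSubgroup.zmultiples_le, AddMonoidHom.mem_ker, cgen, phibar_mk]
    funext j
    rw [Pi.zero_apply, phi_apply, Pi.single_apply]
    simp

lemma part2 (hn : 1 ≤ n) (hp : ∀ i, 2 ≤ p i) :
    ∃ ψ : (LGroup (Fin n) p ⧸ AddSubgroup.zmultiples (cgen p)) ≃+ ((i : Fin n) → ZMod (p i)),
      ∀ i : Fin n, ψ (QuotientAddGroup.mk (egen p i)) = Pi.single i 1 := by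
  refine ⟨(QuotientAddGroup.quotientAddEquivOfEq (phibar_ker p hn hp).symm).trans
    (QuotientAddGroup.quotientKerEquivOfSurjective _ (phibar_surj p hp)), ?_⟩
  intro i
  have h1 : (QuotientAddGroup.quotientAddEquivOfEq (phibar_ker p hn hp).symm)
      (QuotientAddGroup.mk (egen p i)) = QuotientAddGroup.mk (egen p i) := rfl
  have h2 : (QuotientAddGroup.quotientKerEquivOfSurjective _ (phibar_surj p hp))
      (QuotientAddGroup.mk (egen p i)) = phibar p (egen p i) := rfl
  rw [AddEquiv.trans_apply, h1, h2, egen, phibar_mk]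
  funext j
  rw [phi_apply, Pi.single_apply]
  rcases eq_or_ne j i with rfl | hne
  · rw [Pi.single_eq_same]
    simp
  · rw [Pi.single_eq_of_ne hne, if_neg (by simpa using hne)]
    simp

end NF

/-- Every element of `L(p₁,…,pₙ)` has a unique normal form
`y = ∑ aᵢeᵢ + a·c` with `0 ≤ aᵢ < pᵢ`; moreover `y ∈ L₊` iff `a ≥ 0`, and
`L/ℤc ≅ ∏ ℤ/pᵢℤ` via the classes of the `eᵢ`. -/
theorem normal_form_unique (n : ℕ) (hn : 1 ≤ n) (p : Fin n → ℕ) (hp : ∀ i, 2 ≤ p i) :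
    (∀ y : LGroup (Fin n) p,
      ∃ (a : Fin n → ℕ) (aZ : ℤ),
        (∀ i, a i < p i) ∧
        y = (∑ i, a i • egen p i) + aZ • cgen p ∧
        (∀ (a' : Fin n → ℕ) (aZ' : ℤ), (∀ i, a' i < p i) →
          y = (∑ i, a' i • egen p i) + aZ' • cgen p → a' = a ∧ aZ' = aZ) ∧
        (y ∈ Lplus p ↔ 0 ≤ aZ)) ∧
    ∃ ψ : (LGroup (Fin n) p ⧸ AddSubgroup.zmultiples (cgen p)) ≃+ ((i : Fin n) → ZMod (p i)),
      ∀ i : Fin n,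
        ψ (QuotientAddGroup.mk (egen p i)) = Pi.single i 1 := by
  exact ⟨fun y => NF.part1 p hn hp y, NF.part2 p hn hp⟩
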